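/- For every k ∈ M and all y1, y2 ∈ T(k) with y1 ≤ y2, one has r(y1)/g(y1) ≤ r(y2)/g(y2); that is, along the nodes of T(k) the normalized cost rate per capacity unit is non-decreasing in the index. -/

import Mathlib

/-!
Write `ρ i = r i / g i`. Every element `b ≠ k` of `T k` is a younger sibling of a node `z` on the
ancestor chain `P k`, and such a `b` lies below every node of the subtree rooted at `z`, hence below
every node of `P k`. If `b₁ < b₂` in `T k` had `ρ b₂ < ρ b₁`, then `b₂` would be a candidate parent of
`b₁`, so `b₁` has a parent `p b₁ ≤ b₂`; but `p b₁` is a node of `P k` above `k`, which `b₂` cannot reach.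
-/

open scoped Classical
open Finset MeasureTheory

namespace BSHM

noncomputable section

/-- The set of candidate parents of machine type `i`: types `j ∈ M` with `j > i`
and a strictly smaller normalized cost rate per capacity unit. -/
def pset (m : ℕ) (g r : ℕ → ℝ) (i : ℕ) : Set ℕ :=
  {j | j ≤ m ∧ i < j ∧ r j / g j < r i / g i}

/-- The parent `p i` of machine type `i` (equal to `0` when the parent is undefined,
since any actual parent has index `≥ 2`). -/
def p (m : ℕ) (g r : ℕ → ℝ) (i : ℕ) : ℕ := sInf (pset m g r i)

/-- `pdef i` asserts that the parent of `i` is defined. -/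
def pdef (m : ℕ) (g r : ℕ → ℝ) (i : ℕ) : Prop := (pset m g r i).Nonempty

/-- One step of the parent relation: `b` is the (defined) parent of `a`. -/
def pstep (m : ℕ) (g r : ℕ → ℝ) (a b : ℕ) : Prop :=
  pdef m g r a ∧ b = p m g r a

/-- `P i`: the set consisting of `i` together with all of its iterated parents. -/
def P (m : ℕ) (g r : ℕ → ℝ) (i : ℕ) : Set ℕ :=
  {z | Relation.ReflTransGen (pstep m g r) i z}

/-- `A i`: the set of nodes in the tree rooted at `i`,
i.e. all `z ∈ M` having `i` as an ancestor (or equal to `i`). -/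
def A (m : ℕ) (g r : ℕ → ℝ) (i : ℕ) : Set ℕ :=
  {z | 1 ≤ z ∧ z ≤ m ∧ i ∈ P m g r z}

/-- `v i`: the lowest-indexed node in the tree rooted at `i`. -/
def v (m : ℕ) (g r : ℕ → ℝ) (i : ℕ) : ℕ := sInf (A m g r i)

/-- `y i`: the younger siblings of `i` (same parent status, smaller index). -/
def y (m : ℕ) (g r : ℕ → ℝ) (i : ℕ) : Set ℕ :=
  {z | 1 ≤ z ∧ z ≤ m ∧ z < i ∧ p m g r z = p m g r i}

/-- `esib i`: the elder siblings of `i`. -/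
def esib (m : ℕ) (g r : ℕ → ℝ) (i : ℕ) : Set ℕ :=
  {z | 1 ≤ z ∧ z ≤ m ∧ i < z ∧ p m g r z = p m g r i}

/-- `T k := {k} ∪ ⋃_{z ∈ P(k)} y(z)`. -/
def T (m : ℕ) (g r : ℕ → ℝ) (k : ℕ) : Set ℕ :=
  {k} ∪ ⋃ z ∈ P m g r k, y m g r z

/-- `T k` as a `Finset` (all relevant nodes lie in `{k} ∪ [1, m]`). -/
def TIcc (m : ℕ) (g r : ℕ → ℝ) (k : ℕ) : Finset ℕ :=
  (insert k (Finset.Icc 1 m)).filter (fun z => z ∈ T m g r k)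

end

end BSHM

namespace BSHM

variable {m : ℕ} {g r : ℕ → ℝ} {k : ℕ}

lemma p_mem_pset {i : ℕ} (h : pdef m g r i) : p m g r i ∈ pset m g r i := Nat.sInf_mem h

lemma p_le_of_mem_pset {i j : ℕ} (h : j ∈ pset m g r i) : p m g r i ≤ j := Nat.sInf_le h

lemma lt_p {i : ℕ} (h : pdef m g r i) : i < p m g r i := (p_mem_pset h).2.1

lemma pdef_iff_p_ne_zero {i : ℕ} : pdef m g r i ↔ p m g r i ≠ 0 := by
  refine ⟨fun h => (Nat.zero_le i).trans_lt (lt_p h) |>.ne', fun h => ?_⟩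
  by_contra hc
  rw [pdef, Set.not_nonempty_iff_eq_empty] at hc
  simp [p, hc] at h

lemma pdef_congr {a b : ℕ} (h : p m g r a = p m g r b) : pdef m g r a ↔ pdef m g r b := by
  rw [pdef_iff_p_ne_zero, pdef_iff_p_ne_zero, h]

lemma ratio_le_of_lt_p {i j : ℕ} (hjm : j ≤ m) (hij : i < j) (hj : j < p m g r i) :
    r i / g i ≤ r j / g j := by
  by_contra! hlt
  exact (p_le_of_mem_pset ⟨hjm, hij, hlt⟩).not_gt hj

lemma pstep_rightUnique : Relator.RightUnique (pstep m g r) := by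
  rintro a b c ⟨-, rfl⟩ ⟨-, rfl⟩
  rfl

lemma le_of_reflTransGen_pstep {i j : ℕ} (h : Relation.ReflTransGen (pstep m g r) i j) :
    i ≤ j := by
  induction h with
  | refl => exact le_rfl
  | tail _ hstep ih => exact ih.trans (hstep.2 ▸ lt_p hstep.1).le

lemma lt_of_reflTransGen_of_younger_sibling {b z c : ℕ} (hbm : b ≤ m) (hbz : b < z)
    (hpb : p m g r b = p m g r z) (h : Relation.ReflTransGen (pstep m g r) c z) : b < c := by
  have hsib : pdef m g r b → z < p m g r b := fun hb => hpb ▸ lt_p ((pdef_congr hpb).1 hb)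
  induction h using Relation.ReflTransGen.head_induction_on with
  | refl => exact hbz
  | @head c d hstep hrest ih =>
    obtain ⟨hc, rfl⟩ := hstep
    have hpcz : p m g r c ≤ z := le_of_reflTransGen_pstep hrest
    by_contra! hcb
    rcases hcb.lt_or_eq with hcb | rfl
    · have hratio_cb : r c / g c ≤ r b / g b := ratio_le_of_lt_p hbm hcb ih
      -- otherwise `p c` would be a candidate parent of `b`, forcing `p b ≤ p c ≤ z`
      have hbpc : r b / g b ≤ r (p m g r c) / g (p m g r c) := by
        by_contra! hlt
        have hmem : p m g r c ∈ pset m g r b := ⟨(p_mem_pset hc).1, ih, hlt⟩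
        exact (hsib ⟨_, hmem⟩).not_ge ((p_le_of_mem_pset hmem).trans hpcz)
      linarith [(p_mem_pset hc).2.2]
    · exact (hsib hc).not_ge hpcz

lemma lt_of_mem_y_of_mem_P {b z c : ℕ} (hz : z ∈ P m g r k) (hb : b ∈ y m g r z)
    (hc : c ∈ P m g r k) : b < c := by
  obtain ⟨-, hbm, hbz, hpb⟩ := hb
  rcases Relation.ReflTransGen.total_of_right_unique pstep_rightUnique hc hz with hcz | hzc
  · exact lt_of_reflTransGen_of_younger_sibling hbm hbz hpb hcz
  · exact hbz.trans_le (le_of_reflTransGen_pstep hzc)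

lemma mem_T {b : ℕ} : b ∈ T m g r k ↔ b = k ∨ ∃ z ∈ P m g r k, b ∈ y m g r z := by
  simp only [T, Set.mem_union, Set.mem_singleton_iff, Set.mem_iUnion, exists_prop]

lemma lt_of_mem_T_of_mem_P {b c : ℕ} (hb : b ∈ T m g r k) (hc : c ∈ P m g r k) (hkc : k < c) :
    b < c := by
  rcases mem_T.1 hb with rfl | ⟨z, hz, hbz⟩
  · exact hkc
  · exact lt_of_mem_y_of_mem_P hz hbz hc

lemma p_mem_P_of_mem_T {b : ℕ} (hb : b ∈ T m g r k) (hdef : pdef m g r b) :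
    p m g r b ∈ P m g r k ∧ k < p m g r b := by
  rcases mem_T.1 hb with rfl | ⟨z, hz, -, -, hbz, hpb⟩
  · exact ⟨.single ⟨hdef, rfl⟩, lt_p hdef⟩
  · have hz' : pdef m g r z := (pdef_congr hpb).1 hdef
    exact ⟨hpb ▸ hz.tail ⟨hz', rfl⟩,
      (le_of_reflTransGen_pstep hz).trans_lt (hpb ▸ lt_p hz')⟩

lemma le_of_mem_T (hkm : k ≤ m) {b : ℕ} (hb : b ∈ T m g r k) : b ≤ m := by
  rcases mem_T.1 hb with rfl | ⟨z, -, -, hbm, -⟩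
  · exact hkm
  · exact hbm

theorem statement_2_general (m : ℕ) (g r : ℕ → ℝ) :
    ∀ k, 1 ≤ k → k ≤ m →
      ∀ y1 ∈ T m g r k, ∀ y2 ∈ T m g r k, y1 ≤ y2 →
        r y1 / g y1 ≤ r y2 / g y2 := by
  intro k _ hkm y1 hy1 y2 hy2 hle
  by_contra! hlt
  have hcand : y2 ∈ pset m g r y1 :=
    ⟨le_of_mem_T hkm hy2, hle.lt_of_ne (by rintro rfl; exact hlt.false), hlt⟩
  obtain ⟨hP, hk⟩ := p_mem_P_of_mem_T hy1 ⟨_, hcand⟩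
  exact (lt_of_mem_T_of_mem_P hy2 hP hk).not_ge (p_le_of_mem_pset hcand)

/-- For every `k ∈ M` and all `y1, y2 ∈ T(k)` with `y1 ≤ y2`,
one has `r y1 / g y1 ≤ r y2 / g y2`: along the nodes of `T(k)` the normalized
cost rate per capacity unit is non-decreasing in the index. -/
theorem statement_2 (m : ℕ) (g r : ℕ → ℝ)
    (hm : 1 ≤ m)
    (hg1 : 0 < g 1) (hr1 : 0 < r 1)
    (hg : ∀ i j, 1 ≤ i → i < j → j ≤ m → g i < g j)
    (hr : ∀ i j, 1 ≤ i → i < j → j ≤ m → r i < r j) :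
    ∀ k, 1 ≤ k → k ≤ m →
      ∀ y1 ∈ T m g r k, ∀ y2 ∈ T m g r k, y1 ≤ y2 →
        r y1 / g y1 ≤ r y2 / g y2 :=
  statement_2_general m g r

end BSHM
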